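/- arXiv:1302.5033 — 4 statements merged into one kernel-verified Lean document; each statement's English description precedes it below -/
import Mathlib

section
/- Let n ≥ 1 and let m be an integer with 1 ≤ m ≤ n−1. Then the function s ↦ (π / sin(πs/2)) · ζ^{H*}_n(−s) / (2n)!, defined for s near 2m with s ≠ 2m, tends to a finite limit as s → 2m; that is, the meromorphic extension of L_n(s) = ∫_0^∞ x^{s−1}/H*_n(x) dx is pole-free at the points s = 2m with 1 ≤ m ≤ n−1. -/
open Filter

/-- The approximate eta function `ζ^{H*}_n(s) = ∑_{k=1}^n (-1)^{k-1} C(2n, n+k) k^{-s}`. -/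
noncomputable def zetaHstar (n : ℕ) (s : ℂ) : ℂ :=
  ∑ k ∈ Finset.Icc 1 n, (-1 : ℂ) ^ (k - 1) * (Nat.choose (2 * n) (n + k) : ℂ) * (k : ℂ) ^ (-s)

/-!
`ζ^{H*}_n(-2m)` is, up to sign, half of the `2n`-th forward difference of `x ↦ (x - n)^{2m}`
at `0`: the terms `k = n ± j` coincide because `(x - n)^{2m}` is even about `n`. Since
`2m < 2n`, this forward difference vanishes, so the entire function `s ↦ ζ^{H*}_n(-s)` has a
zero at `s = 2m`, which cancels the simple zero of `sin(πs/2)` there.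
-/

open Finset Topology

theorem sum_range_neg_one_pow_mul_choose_mul_add_pow_eq_zero {R : Type*} [CommRing R]
    {j p : ℕ} (hjp : j < p) (y : R) :
    ∑ k ∈ range (p + 1), (-1 : R) ^ (p - k) * p.choose k * (y + k) ^ j = 0 := by
  have h := fwdDiff_iter_eq_sum_shift (1 : R) (fun r : R ↦ r ^ j) p y
  rw [fwdDiff_iter_pow_eq_zero_of_lt hjp] at h
  simpa [zsmul_eq_mul, mul_assoc] using h.symm

theorem sum_range_two_mul_add_one_eq_of_symm {M : Type*} [AddCommMonoid M] (n : ℕ) (c : ℕ → M)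
    (hc : ∀ j ≤ n, c (n - j) = c (n + j)) :
    ∑ k ∈ range (2 * n + 1), c k = c n + 2 • ∑ j ∈ Icc 1 n, c (n + j) := by
  induction n generalizing c with
  | zero => simp
  | succ n ih =>
    have hc' : ∀ j ≤ n, c (n - j + 1) = c (n + j + 1) := fun j hj ↦ by
      simpa [← Nat.sub_add_comm hj, add_right_comm] using hc j (by omega)
    rw [show 2 * (n + 1) + 1 = 2 * n + 1 + 1 + 1 by ring, sum_range_succ, sum_range_succ',
      ih (fun k ↦ c (k + 1)) hc', sum_Icc_succ_top (by omega), smul_add, two_nsmul (c _)]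
    have h0 : c 0 = c (n + 1 + (n + 1)) := by simpa using hc (n + 1) le_rfl
    rw [h0, show 2 * n + 1 + 1 = n + 1 + (n + 1) by ring]
    simp only [add_right_comm n 1]
    abel

theorem zetaHstar_neg_two_mul_eq_zero {n m : ℕ} (hm : 1 ≤ m) (hmn : m < n) :
    zetaHstar n (-((2 * m : ℕ) : ℂ)) = 0 := by
  set c : ℕ → ℂ := fun k ↦ (-1) ^ (2 * n - k) * (2 * n).choose k * (-(n : ℂ) + k) ^ (2 * m)
  have hsum : ∑ k ∈ range (2 * n + 1), c k = 0 :=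
    sum_range_neg_one_pow_mul_choose_mul_add_pow_eq_zero (by omega) _
  have hsymm : ∀ j ≤ n, c (n - j) = c (n + j) := fun j hj ↦ by
    simp only [c, Nat.cast_sub hj, Nat.cast_add]
    congr 1
    · rw [show 2 * n - (n - j) = 2 * n - (n + j) + 2 * j by omega, pow_add,
        (even_two_mul j).neg_one_pow, mul_one, ← Nat.choose_symm (by omega : n + j ≤ 2 * n),
        show 2 * n - (n + j) = n - j by omega]
    · rw [show -(n : ℂ) + (n - j) = -(-(n : ℂ) + (n + j)) by ring, (even_two_mul m).neg_pow]
  have hcn : c n = 0 := by simp [c, show 2 * m ≠ 0 by omega]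
  have hhalf : ∑ j ∈ Icc 1 n, c (n + j) = 0 := by
    rwa [sum_range_two_mul_add_one_eq_of_symm n c hsymm, hcn, zero_add, two_nsmul,
      add_self_eq_zero] at hsum
  calc zetaHstar n (-((2 * m : ℕ) : ℂ))
      = (-1) ^ (n - 1) * ∑ j ∈ Icc 1 n, c (n + j) := by
        rw [zetaHstar, mul_sum]
        refine sum_congr rfl fun k hk ↦ ?_
        obtain ⟨hk1, hkn⟩ := mem_Icc.mp hk
        simp only [c, neg_neg, Complex.cpow_natCast, Nat.cast_add, neg_add_cancel_left]
        rw [← mul_assoc, ← mul_assoc, ← pow_add,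
          show n - 1 + (2 * n - (n + k)) = k - 1 + 2 * (n - k) by omega, pow_add,
          (even_two_mul _).neg_one_pow, mul_one]
    _ = 0 := by rw [hhalf, mul_zero]

theorem differentiable_zetaHstar (n : ℕ) : Differentiable ℂ (zetaHstar n) := by
  unfold zetaHstar
  refine Differentiable.fun_sum fun k hk ↦ (differentiable_const _).mul ?_
  have hk0 : (k : ℂ) ≠ 0 := Nat.cast_ne_zero.mpr (by have := (mem_Icc.mp hk).1; omega)
  exact differentiable_neg.const_cpow (Or.inl hk0)

theorem tendsto_div_nhdsNE_of_hasDerivAt {𝕜 : Type*} [NontriviallyNormedField 𝕜] {f g : 𝕜 → 𝕜}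
    {f' g' a : 𝕜} (hf : HasDerivAt f f' a) (hg : HasDerivAt g g' a) (hfa : f a = 0)
    (hga : g a = 0) (hg' : g' ≠ 0) :
    Tendsto (fun x ↦ f x / g x) (𝓝[≠] a) (𝓝 (f' / g')) := by
  refine ((hasDerivAt_iff_tendsto_slope.mp hf).div
    (hasDerivAt_iff_tendsto_slope.mp hg) hg').congr' ?_
  filter_upwards [self_mem_nhdsWithin] with x hx
  rw [Pi.div_apply, slope_def_field, slope_def_field, hfa, hga, sub_zero, sub_zero]
  exact div_div_div_cancel_right₀ (sub_ne_zero.mpr hx) _ _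

theorem Complex.cos_ne_zero_of_sin_eq_zero {z : ℂ} (h : Complex.sin z = 0) :
    Complex.cos z ≠ 0 := by
  rcases Complex.sin_eq_zero_iff_cos_eq.mp h with h1 | h1 <;> simp [h1]

theorem hasDerivAt_sin_pi_mul_div_two (s : ℂ) :
    HasDerivAt (fun s : ℂ ↦ Complex.sin (Real.pi * s / 2))
      (Complex.cos (Real.pi * s / 2) * (Real.pi / 2)) s := by
  simpa using (((hasDerivAt_id s).const_mul (Real.pi : ℂ)).div_const 2).csin

theorem meromorphic_extension_pole_free_general (n m : ℕ) (hm1 : 1 ≤ m)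
    (hm2 : m ≤ n - 1) :
    ∃ L : ℂ, Filter.Tendsto
      (fun s : ℂ => (Real.pi : ℂ) / Complex.sin ((Real.pi : ℂ) * s / 2) *
        zetaHstar n (-s) / (Nat.factorial (2 * n) : ℂ))
      (nhdsWithin ((2 * m : ℕ) : ℂ) {((2 * m : ℕ) : ℂ)}ᶜ) (nhds L) := by
  set a : ℂ := ((2 * m : ℕ) : ℂ)
  have hsin : Complex.sin (Real.pi * a / 2) = 0 := by
    simpa [a, mul_comm, mul_div_assoc] using Complex.sin_nat_mul_pi m
  have hzeta : HasDerivAt (fun s ↦ zetaHstar n (-s)) (deriv (fun s ↦ zetaHstar n (-s)) a) a :=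
    ((differentiable_zetaHstar n).comp differentiable_neg).differentiableAt.hasDerivAt
  have hlim := tendsto_div_nhdsNE_of_hasDerivAt hzeta (hasDerivAt_sin_pi_mul_div_two a)
    (zetaHstar_neg_two_mul_eq_zero hm1 (by omega)) hsin
    (mul_ne_zero (Complex.cos_ne_zero_of_sin_eq_zero hsin) (by simp [Real.pi_ne_zero]))
  refine ⟨_, (hlim.const_mul ((Real.pi : ℂ) / (Nat.factorial (2 * n) : ℂ))).congr fun s ↦ ?_⟩
  ring

/-- For `n ≥ 1` and `1 ≤ m ≤ n-1`, the meromorphic extension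
`s ↦ (π / sin(πs/2)) · ζ^{H*}_n(-s) / (2n)!` of `L_n` is pole-free at `s = 2m`:
it tends to a finite limit as `s → 2m` (with `s ≠ 2m`). -/
theorem meromorphic_extension_pole_free (n m : ℕ) (hn : 1 ≤ n) (hm1 : 1 ≤ m)
    (hm2 : m ≤ n - 1) :
    ∃ L : ℂ, Filter.Tendsto
      (fun s : ℂ => (Real.pi : ℂ) / Complex.sin ((Real.pi : ℂ) * s / 2) *
        zetaHstar n (-s) / (Nat.factorial (2 * n) : ℂ))
      (nhdsWithin ((2 * m : ℕ) : ℂ) {((2 * m : ℕ) : ℂ)}ᶜ) (nhds L) :=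
  meromorphic_extension_pole_free_general n m hm1 hm2
end

section
/- Let n ≥ 0 and let s be a complex number with 0 < Re s < n+1 and sin(πs) ≠ 0. Then ∫_0^∞ x^{s−1} / H_n(x) dx = (π / sin(πs)) · η_n(1−s) / n!, i.e. ∫_0^∞ x^{s−1} / ∏_{k=1}^{n+1}(x+k) dx = (π / (sin(πs)·n!)) · ∑_{k=0}^{n} (−1)^{k} · C(n, k) · (k+1)^{s−1}. -/
open Real MeasureTheory Finset Set Filter Asymptotics Complex Topology
open scoped Nat

/-! For `0 < Re s < 1`, the partial fraction expansion
`1 / H_n(x) = (1 / n!) ∑_k (-1)^k C(n,k) / (x + k + 1)`, which is the `n`-th forward difference of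
`y ↦ 1 / y` at `x + 1` up to sign, reduces the integral to the Mellin transforms of `1 / (x + a)`.
The substitution `t = x / (x + 1)` turns these into `a^(s-1) B(s, 1 - s) = a^(s-1) π / sin(πs)`.
For larger `Re s`, both `sin(πs)` times the Mellin transform of `1 / H_n` and `(π / n!) η_n(1 - s)`
are holomorphic on the whole strip `0 < Re s < n + 1`, so the identity extends by analytic
continuation. -/

section PartialFractions

variable {K : Type*} [Field K]

theorem fwdDiff_iter_inv (n : ℕ) (x : K) (hx : ∀ k : ℕ, x + k ≠ 0) :
    (fwdDiff 1)^[n] (fun y : K => y⁻¹) x = (-1) ^ n * n ! / ∏ k ∈ range (n + 1), (x + k) := by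
  induction n generalizing x with
  | zero => simp
  | succ n ih =>
    have hx' : ∀ k : ℕ, x + 1 + k ≠ 0 := fun k => by
      simpa [add_assoc, add_comm (1 : K)] using hx (k + 1)
    have hP : ∏ k ∈ range (n + 1), (x + k) ≠ 0 := prod_ne_zero_iff.2 fun k _ => hx k
    have hP' : ∏ k ∈ range (n + 1), (x + 1 + k) ≠ 0 := prod_ne_zero_iff.2 fun k _ => hx' k
    have hfirst : ∏ k ∈ range (n + 1 + 1), (x + k) = x * ∏ k ∈ range (n + 1), (x + 1 + k) := by
      rw [prod_range_succ', mul_comm]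
      push_cast
      simp only [add_zero, add_assoc, add_comm (1 : K)]
    have hlast :
        ∏ k ∈ range (n + 1 + 1), (x + k) = (∏ k ∈ range (n + 1), (x + k)) * (x + (n + 1)) := by
      rw [prod_range_succ]
      push_cast
      rfl
    have hn := hx (n + 1)
    push_cast at hn
    rw [Function.iterate_succ_apply', fwdDiff, ih x hx, ih (x + 1) hx', div_sub_div _ _ hP' hP,
      div_eq_div_iff (mul_ne_zero hP' hP) (by rw [hlast]; exact mul_ne_zero hP hn),
      Nat.factorial_succ]
    push_cast
    linear_combination ((-1) ^ n * (n ! : K) * ∏ k ∈ range (n + 1), (x + k)) * hfirst -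
      ((-1) ^ n * (n ! : K) * ∏ k ∈ range (n + 1), (x + 1 + k)) * hlast

theorem sum_range_choose_mul_inv_add (n : ℕ) (x : K) (hx : ∀ k : ℕ, x + k ≠ 0) :
    ∑ k ∈ range (n + 1), (-1) ^ k * n.choose k * (x + k)⁻¹ =
      n ! / ∏ k ∈ range (n + 1), (x + k) := by
  have h := fwdDiff_iter_eq_sum_shift (1 : K) (fun y : K => y⁻¹) n x
  rw [fwdDiff_iter_inv n x hx] at h
  calc ∑ k ∈ range (n + 1), (-1) ^ k * n.choose k * (x + k)⁻¹
      = (-1) ^ n *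
          ∑ k ∈ range (n + 1), ((-1 : ℤ) ^ (n - k) * n.choose k) • (x + k • (1 : K))⁻¹ := by
        rw [mul_sum]
        refine sum_congr rfl fun k hk => ?_
        have hkn : n + (n - k) = k + 2 * (n - k) := by have := mem_range.1 hk; omega
        rw [zsmul_eq_mul, nsmul_one]
        push_cast
        rw [← mul_assoc, ← mul_assoc, ← pow_add, hkn, pow_add, pow_mul, neg_one_sq, one_pow,
          mul_one]
    _ = n ! / ∏ k ∈ range (n + 1), (x + k) := by
        rw [← h, ← mul_div_assoc, ← mul_assoc, ← pow_add, ← two_mul, pow_mul, neg_one_sq, one_pow,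
          one_mul]

end PartialFractions

theorem mellin_finsetSum {E ι : Type*} [NormedAddCommGroup E] [NormedSpace ℂ E] (t : Finset ι)
    {f : ι → ℝ → E} {s : ℂ} (hf : ∀ i ∈ t, MellinConvergent (f i) s) :
    mellin (fun x => ∑ i ∈ t, f i x) s = ∑ i ∈ t, mellin (f i) s := by
  simp only [mellin, smul_sum]
  exact integral_finsetSum t hf

theorem betaIntegral_one_sub {s : ℂ} (hs₀ : 0 < s.re) (hs₁ : s.re < 1) :
    betaIntegral s (1 - s) = π / Complex.sin (π * s) := by
  have h1s : 0 < (1 - s).re := by rwa [sub_re, one_re, sub_pos]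
  have h := Gamma_mul_Gamma_eq_betaIntegral hs₀ h1s
  rwa [add_sub_cancel, Complex.Gamma_one, one_mul, Complex.Gamma_mul_Gamma_one_sub, eq_comm] at h

theorem image_div_add_one_Ioi : (fun x : ℝ => x / (x + 1)) '' Ioi 0 = Set.Ioo 0 1 := by
  ext t
  constructor
  · rintro ⟨x, hx, rfl⟩
    have hx : 0 < x := hx
    exact ⟨by positivity, (div_lt_one (by positivity)).2 (lt_add_one x)⟩
  · rintro ⟨ht₀, ht₁⟩
    refine ⟨t / (1 - t), div_pos ht₀ (sub_pos.2 ht₁), ?_⟩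
    have : 1 - t ≠ 0 := (sub_pos.2 ht₁).ne'
    field_simp
    ring

theorem injOn_div_add_one_Ioi : InjOn (fun x : ℝ => x / (x + 1)) (Ioi 0) := by
  intro x hx y hy hxy
  have hx : 0 < x := hx
  have hy : 0 < y := hy
  simp only at hxy
  field_simp at hxy
  linarith

theorem mellin_inv_add_one {s : ℂ} (hs₀ : 0 < s.re) (hs₁ : s.re < 1) :
    mellin (fun x : ℝ => ((x : ℂ) + 1)⁻¹) s = π / Complex.sin (π * s) := by
  have hderiv : ∀ x ∈ Ioi (0 : ℝ),
      HasDerivWithinAt (fun x : ℝ => x / (x + 1)) (((x + 1) ^ 2)⁻¹) (Ioi 0) x := fun x hx => by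
    have hx : x + 1 ≠ 0 := by have : (0 : ℝ) < x := hx; positivity
    refine (((hasDerivAt_id' x).div ((hasDerivAt_id' x).add_const 1) hx).congr_deriv
      ?_).hasDerivWithinAt
    field_simp
    ring
  rw [← betaIntegral_one_sub hs₀ hs₁, betaIntegral, intervalIntegral.integral_of_le zero_le_one,
    integral_Ioc_eq_integral_Ioo, ← image_div_add_one_Ioi,
    integral_image_eq_integral_abs_deriv_smul measurableSet_Ioi hderiv injOn_div_add_one_Ioi, mellin]
  refine setIntegral_congr_fun measurableSet_Ioi fun x hx => ?_
  have hx : 0 < x := hx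
  have hc : (0 : ℝ) < (x + 1)⁻¹ := by positivity
  have hc' : (((x + 1)⁻¹ : ℝ) : ℂ) ≠ 0 := ofReal_ne_zero.2 hc.ne'
  have hsplit : ((x / (x + 1) : ℝ) : ℂ) ^ (s - 1) =
      (x : ℂ) ^ (s - 1) * (((x + 1)⁻¹ : ℝ) : ℂ) ^ (s - 1) := by
    rw [div_eq_mul_inv, ofReal_mul, mul_cpow_ofReal_nonneg hx.le hc.le]
  have hone_sub : (1 : ℂ) - ((x / (x + 1) : ℝ) : ℂ) = (((x + 1)⁻¹ : ℝ) : ℂ) := by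
    have : (x : ℂ) + 1 ≠ 0 := by exact_mod_cast (show x + 1 ≠ 0 by positivity)
    push_cast
    field_simp
    ring
  have hpow : (((x + 1)⁻¹ : ℝ) : ℂ) ^ (s - 1) * (((x + 1)⁻¹ : ℝ) : ℂ) ^ (1 - s - 1) =
      (((x + 1)⁻¹ : ℝ) : ℂ)⁻¹ := by
    rw [← cpow_add _ _ hc', show s - 1 + (1 - s - 1) = -1 by ring, cpow_neg_one]
  rw [abs_of_pos (by positivity), real_smul, hsplit, hone_sub, smul_eq_mul, mul_assoc, hpow]
  push_cast
  field_simp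

theorem inv_ofReal_mul_add (a t : ℝ) :
    (((a * t : ℝ) : ℂ) + a)⁻¹ = (a : ℂ)⁻¹ • ((t : ℂ) + 1)⁻¹ := by
  rw [smul_eq_mul, ← mul_inv, ofReal_mul, mul_add_one]

theorem mellin_inv_add {a : ℝ} (ha : 0 < a) {s : ℂ} (hs₀ : 0 < s.re) (hs₁ : s.re < 1) :
    mellin (fun x : ℝ => ((x : ℂ) + a)⁻¹) s = (a : ℂ) ^ (s - 1) * (π / Complex.sin (π * s)) := by
  have ha' : (a : ℂ) ≠ 0 := ofReal_ne_zero.2 ha.ne'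
  have h := mellin_comp_mul_left (fun x : ℝ => ((x : ℂ) + a)⁻¹) s ha
  simp only [inv_ofReal_mul_add] at h
  rw [mellin_const_smul, mellin_inv_add_one hs₀ hs₁, smul_eq_mul, smul_eq_mul, cpow_neg] at h
  rw [eq_comm, inv_mul_eq_iff_eq_mul₀ (cpow_ne_zero_iff.2 (.inl ha'))] at h
  rw [h, cpow_sub _ _ ha', cpow_one]
  ring

def H (n : ℕ) (x : ℂ) : ℂ := ∏ k ∈ Icc 1 (n + 1), (x + k)

theorem H_eq_prod_range (n : ℕ) (x : ℂ) : H n x = ∏ k ∈ range (n + 1), (x + 1 + k) := by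
  rw [H, ← Finset.Ico_add_one_right_eq_Icc, prod_Ico_eq_prod_range]
  refine prod_congr (by simp) fun k _ => ?_
  push_cast
  ring

theorem H_zero (x : ℂ) : H 0 x = x + 1 := by simp [H]

theorem norm_H_ofReal (n : ℕ) {x : ℝ} (hx : 0 ≤ x) :
    ‖H n x‖ = ∏ k ∈ Icc 1 (n + 1), (x + k) := by
  rw [H, norm_prod]
  refine prod_congr rfl fun k _ => ?_
  rw [← ofReal_natCast, ← ofReal_add, norm_real, Real.norm_of_nonneg (by positivity)]

theorem one_le_norm_H (n : ℕ) {x : ℝ} (hx : 0 ≤ x) : 1 ≤ ‖H n x‖ := by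
  rw [norm_H_ofReal n hx]
  refine Finset.one_le_prod fun k hk => ?_
  have : (1 : ℝ) ≤ k := by exact_mod_cast (mem_Icc.1 hk).1
  linarith

theorem pow_le_norm_H (n : ℕ) {x : ℝ} (hx : 0 ≤ x) : x ^ (n + 1) ≤ ‖H n x‖ := by
  rw [norm_H_ofReal n hx]
  calc x ^ (n + 1) = ∏ _k ∈ Icc 1 (n + 1), x := by simp
    _ ≤ ∏ k ∈ Icc 1 (n + 1), (x + k) :=
      prod_le_prod (fun _ _ => hx) fun k _ => le_add_of_nonneg_right k.cast_nonneg

theorem H_ne_zero (n : ℕ) {x : ℝ} (hx : 0 ≤ x) : H n x ≠ 0 :=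
  norm_pos_iff.1 (one_pos.trans_le (one_le_norm_H n hx))

theorem continuousOn_inv_H (n : ℕ) : ContinuousOn (fun x : ℝ => (H n x)⁻¹) (Ici 0) :=
  ContinuousOn.inv₀ (by unfold H; fun_prop) fun _ hx => H_ne_zero n hx

theorem isBigO_atTop_inv_H (n : ℕ) :
    (fun x : ℝ => (H n x)⁻¹) =O[atTop] (· ^ (-(n + 1 : ℝ))) := by
  refine IsBigO.of_bound 1 ?_
  filter_upwards [eventually_gt_atTop 0] with x hx
  rw [norm_inv, one_mul, Real.norm_of_nonneg (by positivity), rpow_neg hx.le]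
  exact_mod_cast inv_anti₀ (by positivity) (pow_le_norm_H n hx.le)

theorem isBigO_nhdsGT_zero_inv_H (n : ℕ) :
    (fun x : ℝ => (H n x)⁻¹) =O[𝓝[>] 0] (· ^ (-(0 : ℝ))) := by
  refine IsBigO.of_bound 1 ?_
  filter_upwards [self_mem_nhdsWithin] with x hx
  rw [norm_inv, neg_zero, rpow_zero, norm_one, one_mul]
  exact inv_le_one_of_one_le₀ (one_le_norm_H n hx.le)

theorem mellinConvergent_inv_H {n : ℕ} {s : ℂ} (hs₀ : 0 < s.re) (hs : s.re < n + 1) :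
    MellinConvergent (fun x : ℝ => (H n x)⁻¹) s :=
  mellinConvergent_of_isBigO_rpow
    ((continuousOn_inv_H n).locallyIntegrableOn measurableSet_Ici |>.mono_set Ioi_subset_Ici_self)
    (isBigO_atTop_inv_H n) hs (isBigO_nhdsGT_zero_inv_H n) hs₀

theorem differentiableAt_mellin_inv_H {n : ℕ} {s : ℂ} (hs₀ : 0 < s.re) (hs : s.re < n + 1) :
    DifferentiableAt ℂ (mellin fun x : ℝ => (H n x)⁻¹) s :=
  mellin_differentiableAt_of_isBigO_rpow
    ((continuousOn_inv_H n).locallyIntegrableOn measurableSet_Ici |>.mono_set Ioi_subset_Ici_self)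
    (isBigO_atTop_inv_H n) hs (isBigO_nhdsGT_zero_inv_H n) hs₀

theorem mellinConvergent_inv_add {a : ℝ} (ha : 0 < a) {s : ℂ} (hs₀ : 0 < s.re)
    (hs₁ : s.re < 1) :
    MellinConvergent (fun x : ℝ => ((x : ℂ) + a)⁻¹) s := by
  rw [← MellinConvergent.comp_mul_left ha]
  have h : MellinConvergent (fun x : ℝ => (H 0 x)⁻¹) s := mellinConvergent_inv_H hs₀ (by simpa)
  simpa only [inv_ofReal_mul_add, H_zero] using h.const_smul (a : ℂ)⁻¹

theorem inv_H_eq_sum (n : ℕ) {x : ℝ} (hx : 0 ≤ x) :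
    (H n x)⁻¹ = ∑ k ∈ range (n + 1),
      ((-1) ^ k * n.choose k / n ! : ℂ) • ((x : ℂ) + ((k + 1 : ℝ) : ℂ))⁻¹ := by
  have hx' : ∀ k : ℕ, (x : ℂ) + 1 + k ≠ 0 := fun k => by
    exact_mod_cast (show x + 1 + k ≠ 0 by positivity)
  have h := sum_range_choose_mul_inv_add n ((x : ℂ) + 1) hx'
  rw [← H_eq_prod_range] at h
  have hsum : ∑ k ∈ range (n + 1),
      ((-1) ^ k * n.choose k / n ! : ℂ) • ((x : ℂ) + ((k + 1 : ℝ) : ℂ))⁻¹ =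
        (n ! : ℂ)⁻¹ * ∑ k ∈ range (n + 1), (-1) ^ k * n.choose k * ((x : ℂ) + 1 + k)⁻¹ := by
    rw [mul_sum]
    refine sum_congr rfl fun k _ => ?_
    push_cast
    ring
  rw [hsum, h, div_eq_mul_inv, inv_mul_cancel_left₀ (Nat.cast_ne_zero.2 n.factorial_ne_zero)]

theorem mem_integerComplement_of_re_pos_of_re_lt_one {s : ℂ} (hs₀ : 0 < s.re)
    (hs₁ : s.re < 1) :
    s ∈ integerComplement := by
  rintro ⟨m, rfl⟩
  rw [intCast_re] at hs₀ hs₁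
  norm_cast at hs₀ hs₁
  omega

theorem mellin_inv_H_of_re_lt_one (n : ℕ) {s : ℂ} (hs₀ : 0 < s.re) (hs₁ : s.re < 1) :
    mellin (fun x : ℝ => (H n x)⁻¹) s = π / (Complex.sin (π * s) * n !) *
      ∑ k ∈ range (n + 1), (-1) ^ k * n.choose k * ((k : ℂ) + 1) ^ (s - 1) := by
  have hsum : mellin (fun x : ℝ => (H n x)⁻¹) s = mellin (fun x : ℝ => ∑ k ∈ range (n + 1),
      ((-1) ^ k * n.choose k / n ! : ℂ) • ((x : ℂ) + ((k + 1 : ℝ) : ℂ))⁻¹) s :=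
    setIntegral_congr_fun measurableSet_Ioi fun x hx => by
      dsimp only
      rw [inv_H_eq_sum n (le_of_lt hx)]
  rw [hsum, mellin_finsetSum _ fun k _ =>
    (mellinConvergent_inv_add (by positivity) hs₀ hs₁).const_smul _, mul_sum]
  refine sum_congr rfl fun k _ => ?_
  rw [mellin_const_smul, mellin_inv_add (by positivity) hs₀ hs₁, smul_eq_mul]
  push_cast
  field_simp

theorem differentiable_sum_choose_mul_cpow (n : ℕ) :
    Differentiable ℂ fun s : ℂ =>
      ∑ k ∈ range (n + 1), (-1) ^ k * n.choose k * ((k : ℂ) + 1) ^ (s - 1) :=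
  Differentiable.fun_sum fun k _ => ((differentiable_id.sub_const 1).const_cpow
    (.inl (by exact_mod_cast k.succ_ne_zero))).const_mul _

theorem sin_mul_mellin_inv_H {n : ℕ} {s : ℂ} (hs₀ : 0 < s.re) (hs : s.re < n + 1) :
    Complex.sin (π * s) * mellin (fun x : ℝ => (H n x)⁻¹) s =
      π / n ! * ∑ k ∈ range (n + 1), (-1) ^ k * n.choose k * ((k : ℂ) + 1) ^ (s - 1) := by
  let strip : ℝ → Set ℂ := fun b => {z | 0 < z.re} ∩ {z | z.re < b}
  have hopen : ∀ b, IsOpen (strip b) := fun b =>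
    (isOpen_lt continuous_const continuous_re).inter (isOpen_lt continuous_re continuous_const)
  have hhalf : (1 / 2 : ℂ) ∈ strip 1 := by norm_num [strip]
  have hhalf' : (1 / 2 : ℂ) ∈ strip (n + 1) := by
    norm_num [strip]
    linarith [n.cast_nonneg (α := ℝ)]
  have hF : AnalyticOnNhd ℂ (fun z => Complex.sin (π * z) * mellin (fun x : ℝ => (H n x)⁻¹) z)
      (strip (n + 1)) := by
    refine DifferentiableOn.analyticOnNhd (fun z hz => ?_) (hopen _)
    exact ((by fun_prop : Differentiable ℂ fun z => Complex.sin (π * z)) z).mul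
      (differentiableAt_mellin_inv_H hz.1 hz.2) |>.differentiableWithinAt
  have hG := ((differentiable_sum_choose_mul_cpow n).const_mul
    (π / n ! : ℂ)).differentiableOn.analyticOnNhd (hopen (n + 1))
  refine hF.eqOn_of_preconnected_of_eventuallyEq hG
    ((convex_halfSpace_re_gt 0).inter (convex_halfSpace_re_lt _)).isPreconnected hhalf' ?_
    ⟨hs₀, hs⟩
  filter_upwards [(hopen 1).mem_nhds hhalf] with z hz
  rw [mellin_inv_H_of_re_lt_one n hz.1 hz.2]
  have := sin_pi_mul_ne_zero (mem_integerComplement_of_re_pos_of_re_lt_one hz.1 hz.2)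
  field_simp

/-- For `n ≥ 0` and complex `s` with `0 < Re s < n+1` and `sin(πs) ≠ 0`,
`∫_0^∞ x^{s-1} / ∏_{k=1}^{n+1} (x + k) dx
  = (π / (sin(πs) · n!)) · ∑_{k=0}^n (-1)^k C(n,k) (k+1)^{s-1}`. -/
theorem integral_H_eq (n : ℕ) (s : ℂ) (h0 : 0 < s.re) (hn1 : s.re < n + 1)
    (hsin : Complex.sin ((Real.pi : ℂ) * s) ≠ 0) :
    ∫ x in Set.Ioi (0 : ℝ),
        (x : ℂ) ^ (s - 1) / ∏ k ∈ Finset.Icc 1 (n + 1), ((x : ℂ) + (k : ℂ))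
      = (Real.pi : ℂ) / (Complex.sin ((Real.pi : ℂ) * s) * (Nat.factorial n : ℂ)) *
        ∑ k ∈ Finset.range (n + 1), (-1 : ℂ) ^ k * (Nat.choose n k : ℂ) *
          ((k : ℂ) + 1) ^ (s - 1) := by
  change mellin (fun x : ℝ => (H n x)⁻¹) s = _
  rw [← mul_right_inj' hsin, sin_mul_mellin_inv_H h0 hn1]
  field_simp
end

section
/- Let s be a complex number with Re s > 0 and s ≠ 1. Then the series ∑_{n=0}^{∞} 2^{−(n+1)} · η_n(s) converges and ∑_{n=0}^{∞} 2^{−(n+1)} · ∑_{k=0}^{n} (−1)^{k} · C(n, k) · (k+1)^{−s} = (1 − 2^{1−s}) · ζ(s), where ζ denotes the Riemann zeta function (as analytically continued). -/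
/-!
For `0 < re s`, `Γ(s) η_n(s)` is the Mellin transform of `(1 - e^{-t})^n e^{-t}`. Weighting by
`2^{-(n+1)}` and summing the geometric series in `(1 - e^{-t}) / 2` gives `e^{-t} / (1 + e^{-t})`;
the interchange of sum and integral is justified by the uniform bound `e^{-t}` on all these kernels.
For `1 < re s`, expanding `e^{-t} / (1 + e^{-t})` as an alternating geometric series identifies its
Mellin transform with `Γ(s) (1 - 2^{1-s}) ζ(s)`. Both sides are holomorphic on the connected set
`{0 < re s} \ {1}`, so the identity persists there, and `Γ(s) ≠ 0` can be cancelled.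
-/

open Complex MeasureTheory Set Filter Topology

noncomputable def localEta (n : ℕ) (s : ℂ) : ℂ :=
  ∑ k ∈ Finset.range (n + 1), (-1 : ℂ) ^ k * (n.choose k : ℂ) * ((k : ℂ) + 1) ^ (-s)

noncomputable def hasseKernel (n : ℕ) (t : ℝ) : ℂ := ((1 - Real.exp (-t)) ^ n * Real.exp (-t) : ℝ)

noncomputable def etaKernel (t : ℝ) : ℂ := (Real.exp (-t) / (1 + Real.exp (-t)) : ℝ)

section

variable {s : ℂ}

theorem one_sub_pow_mul_eq_sum {R : Type*} [CommRing R] (x : R) (n : ℕ) :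
    (1 - x) ^ n * x = ∑ k ∈ Finset.range (n + 1), (-1) ^ k * (n.choose k : R) * x ^ (k + 1) := by
  rw [sub_eq_neg_add, add_pow, Finset.sum_mul]
  refine Finset.sum_congr rfl fun k _ => ?_
  rw [one_pow, neg_pow, pow_succ]
  ring

theorem Real.exp_neg_pow_succ (t : ℝ) (k : ℕ) :
    Real.exp (-t) ^ (k + 1) = Real.exp (-((k : ℝ) + 1) * t) := by
  rw [← Real.exp_nat_mul]
  push_cast
  ring_nf

theorem hasSum_one_div_two_pow_mul_one_sub_pow_mul {x : ℂ} (hx : ‖1 - x‖ < 2) :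
    HasSum (fun n : ℕ => 1 / 2 ^ (n + 1) * ((1 - x) ^ n * x)) (x / (1 + x)) := by
  have hq : ‖(1 - x) / 2‖ < 1 := by
    rw [norm_div, Complex.norm_two]; linarith
  have hx1 : 1 + x ≠ 0 := by
    rintro h
    rw [show x = -1 by linear_combination h] at hx
    norm_num at hx
  have h := (hasSum_geometric_of_norm_lt_one hq).mul_left (x / 2)
  rw [show x / 2 * (1 - (1 - x) / 2)⁻¹ = x / (1 + x) by
    rw [show 1 - (1 - x) / 2 = (1 + x) / 2 by ring]; field_simp] at h
  refine h.congr_fun fun n => ?_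
  rw [div_pow, pow_succ]
  field_simp

theorem HasSum.alternating {α : Type*} [Ring α] [UniformSpace α] [IsUniformAddGroup α]
    [CompleteSpace α] [T2Space α] {f : ℕ → α} {a b : α} (hf : HasSum f a)
    (hodd : HasSum (fun m => f (2 * m + 1)) b) :
    HasSum (fun k => (-1) ^ k * f k) (a - 2 * b) := by
  obtain ⟨e, heven⟩ := hf.summable.comp_injective (mul_right_injective₀ (two_ne_zero' ℕ))
  have hsplit : e + b = a := (heven.even_add_odd hodd).unique hf
  rw [← hsplit, two_mul, add_sub_add_right_eq_sub, sub_eq_add_neg]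
  refine HasSum.even_add_odd ?_ ?_
  · simpa only [even_two, Even.mul_right, Even.neg_pow, one_pow, one_mul, Function.comp_def]
      using heven
  · simpa only [pow_add, even_two, Even.mul_right, Even.neg_pow, one_pow, pow_one, one_mul,
      neg_mul] using hodd.neg

theorem norm_cpow_smul_le_of_norm_le_exp_neg {f : ℝ → ℂ} {t : ℝ} (ht : 0 < t)
    (hf : ‖f t‖ ≤ Real.exp (-t)) :
    ‖(t : ℂ) ^ (s - 1) • f t‖ ≤ Real.exp (-t) * t ^ (s.re - 1) := by
  rw [norm_smul, norm_cpow_eq_rpow_re_of_pos ht, sub_re, one_re, mul_comm]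
  exact mul_le_mul_of_nonneg_right hf (Real.rpow_nonneg ht.le _)

theorem mellinConvergent_of_norm_le_exp_neg {f : ℝ → ℂ}
    (hmeas : AEStronglyMeasurable f (volume.restrict (Ioi 0)))
    (hf : ∀ t > (0 : ℝ), ‖f t‖ ≤ Real.exp (-t)) (hs : 0 < s.re) : MellinConvergent f s := by
  refine (Real.GammaIntegral_convergent hs).mono' ?_ ?_
  · have hcpow : ContinuousOn (fun t : ℝ => (t : ℂ) ^ (s - 1)) (Ioi 0) := fun t ht =>
      (continuousAt_ofReal_cpow_const t _ (Or.inr (ne_of_gt ht))).continuousWithinAt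
    exact (hcpow.aestronglyMeasurable measurableSet_Ioi).smul hmeas
  · filter_upwards [ae_restrict_mem measurableSet_Ioi] with t ht
    exact norm_cpow_smul_le_of_norm_le_exp_neg ht (hf t ht)

theorem integral_norm_cpow_smul_le_Gamma {f : ℝ → ℂ}
    (hmeas : AEStronglyMeasurable f (volume.restrict (Ioi 0)))
    (hf : ∀ t > (0 : ℝ), ‖f t‖ ≤ Real.exp (-t)) (hs : 0 < s.re) :
    ∫ t in Ioi (0 : ℝ), ‖(t : ℂ) ^ (s - 1) • f t‖ ≤ Real.Gamma s.re := by
  rw [Real.Gamma_eq_integral hs]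
  exact setIntegral_mono_on (mellinConvergent_of_norm_le_exp_neg hmeas hf hs).norm
    (Real.GammaIntegral_convergent hs) measurableSet_Ioi
    fun t ht => norm_cpow_smul_le_of_norm_le_exp_neg ht (hf t ht)

theorem hasSum_mellin_of_norm_le_exp_neg {c : ℕ → ℂ} {f : ℕ → ℝ → ℂ} {F : ℝ → ℂ}
    (hc : Summable (‖c ·‖)) (hmeas : ∀ n, AEStronglyMeasurable (f n) (volume.restrict (Ioi 0)))
    (hf : ∀ n, ∀ t > (0 : ℝ), ‖f n t‖ ≤ Real.exp (-t))
    (hF : ∀ t > (0 : ℝ), HasSum (fun n => c n * f n t) (F t)) (hs : 0 < s.re) :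
    HasSum (fun n => c n * mellin (f n) s) (mellin F s) := by
  have hint (n : ℕ) : Integrable (fun t : ℝ => c n * ((t : ℂ) ^ (s - 1) • f n t))
      (volume.restrict (Ioi 0)) :=
    (mellinConvergent_of_norm_le_exp_neg (hmeas n) (hf n) hs).const_mul (c n)
  have hnorm : Summable fun n => ∫ t in Ioi (0 : ℝ), ‖c n * ((t : ℂ) ^ (s - 1) • f n t)‖ := by
    refine (hc.mul_right (Real.Gamma s.re)).of_nonneg_of_le
      (fun n => integral_nonneg fun _ => norm_nonneg _) fun n => ?_
    simp_rw [norm_mul, integral_const_mul]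
    exact mul_le_mul_of_nonneg_left (integral_norm_cpow_smul_le_Gamma (hmeas n) (hf n) hs)
      (norm_nonneg _)
  have h := hasSum_integral_of_summable_integral_norm hint hnorm
  simp_rw [integral_const_mul] at h
  have hF' : mellin F s = ∫ t in Ioi (0 : ℝ), ∑' n, c n * ((t : ℂ) ^ (s - 1) • f n t) :=
    setIntegral_congr_fun measurableSet_Ioi fun t ht => by
      simp_rw [smul_eq_mul, ← (hF t ht).tsum_eq, ← tsum_mul_left, mul_left_comm]
  rwa [hF']

theorem continuous_hasseKernel (n : ℕ) : Continuous (hasseKernel n) := by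
  unfold hasseKernel
  fun_prop

theorem continuous_etaKernel : Continuous etaKernel := by
  unfold etaKernel
  refine continuous_ofReal.comp (Continuous.div (by fun_prop) (by fun_prop) fun t => ?_)
  positivity

theorem norm_hasseKernel_le (n : ℕ) {t : ℝ} (ht : 0 < t) : ‖hasseKernel n t‖ ≤ Real.exp (-t) := by
  have hexp : Real.exp (-t) < 1 := Real.exp_lt_one_iff.2 (neg_lt_zero.2 ht)
  have hbase : 0 ≤ 1 - Real.exp (-t) := by linarith
  rw [hasseKernel, norm_real, Real.norm_of_nonneg (by positivity)]
  exact mul_le_of_le_one_left (Real.exp_pos _).le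
    (pow_le_one₀ hbase (by linarith [Real.exp_pos (-t)]))

theorem norm_etaKernel_le (t : ℝ) : ‖etaKernel t‖ ≤ Real.exp (-t) := by
  have hexp := Real.exp_pos (-t)
  rw [etaKernel, norm_real, Real.norm_of_nonneg (by positivity)]
  exact div_le_self hexp.le (by linarith)

theorem mellin_hasseKernel (n : ℕ) (hs : 0 < s.re) :
    mellin (hasseKernel n) s = Gamma s * localEta n s := by
  have hvanish : ∀ k ∉ Finset.range (n + 1), (-1 : ℂ) ^ k * (n.choose k : ℂ) = 0 := fun k hk => by
    rw [Nat.choose_eq_zero_of_lt (by simpa using hk), Nat.cast_zero, mul_zero]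
  have h := hasSum_mellin (a := fun k : ℕ => (-1 : ℂ) ^ k * (n.choose k : ℂ))
    (p := fun k : ℕ => (k : ℝ) + 1) (F := hasseKernel n) (fun k => Or.inr (by positivity)) hs
    (fun t _ => ?_) (summable_of_ne_finset_zero (s := Finset.range (n + 1)) fun k hk => ?_)
  · rw [h.unique (hasSum_sum_of_ne_finset_zero fun k hk => by
      rw [hvanish k hk, mul_zero, zero_div]), localEta, Finset.mul_sum]
    refine Finset.sum_congr rfl fun k _ => ?_
    rw [cpow_neg]
    push_cast
    ring
  · have hexpand : hasseKernel n t = ∑ k ∈ Finset.range (n + 1),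
        (-1 : ℂ) ^ k * (n.choose k : ℂ) * (Real.exp (-((k : ℝ) + 1) * t) : ℂ) := by
      rw [hasseKernel, one_sub_pow_mul_eq_sum]
      simp_rw [Real.exp_neg_pow_succ]
      push_cast
      rfl
    rw [hexpand]
    exact hasSum_sum_of_ne_finset_zero fun k hk => by rw [hvanish k hk, zero_mul]
  · rw [hvanish k hk, norm_zero, zero_div]

theorem hasSum_hasseKernel {t : ℝ} (ht : 0 < t) :
    HasSum (fun n : ℕ => 1 / 2 ^ (n + 1) * hasseKernel n t) (etaKernel t) := by
  have hexp : Real.exp (-t) < 1 := Real.exp_lt_one_iff.2 (neg_lt_zero.2 ht)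
  have hx : ‖1 - (Real.exp (-t) : ℂ)‖ < 2 := by
    rw [← ofReal_one, ← ofReal_sub, norm_real, Real.norm_of_nonneg (by linarith)]
    linarith [Real.exp_pos (-t)]
  convert hasSum_one_div_two_pow_mul_one_sub_pow_mul hx using 1
  · ext n
    simp [hasseKernel]
  · simp [etaKernel]

theorem hasSum_Gamma_mul_localEta (hs : 0 < s.re) :
    HasSum (fun n : ℕ => 1 / 2 ^ (n + 1) * (Gamma s * localEta n s)) (mellin etaKernel s) := by
  have hc : Summable fun n : ℕ => ‖(1 / 2 ^ (n + 1) : ℂ)‖ := by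
    simpa [pow_succ, mul_comm] using summable_geometric_two.mul_left 2⁻¹
  simpa only [mellin_hasseKernel _ hs] using hasSum_mellin_of_norm_le_exp_neg hc
    (fun n => (continuous_hasseKernel n).aestronglyMeasurable)
    (fun n t ht => norm_hasseKernel_le n ht) (fun t ht => hasSum_hasseKernel ht) hs

theorem hasSum_one_div_nat_add_one_cpow (hs : 1 < s.re) :
    HasSum (fun k : ℕ => 1 / ((k : ℂ) + 1) ^ s) (riemannZeta s) := by
  have hsum : Summable fun k : ℕ => 1 / ((k : ℂ) + 1) ^ s := by
    simpa using (summable_nat_add_iff 1).2 (summable_one_div_nat_cpow.2 hs)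
  rw [zeta_eq_tsum_one_div_nat_add_one_cpow hs]
  exact hsum.hasSum

theorem hasSum_neg_one_pow_div_nat_add_one_cpow (hs : 1 < s.re) :
    HasSum (fun k : ℕ => (-1) ^ k / ((k : ℂ) + 1) ^ s) ((1 - 2 ^ (1 - s)) * riemannZeta s) := by
  have hζ := hasSum_one_div_nat_add_one_cpow hs
  have hodd : HasSum (fun m : ℕ => 1 / (((2 * m + 1 : ℕ) : ℂ) + 1) ^ s)
      (2 ^ (-s) * riemannZeta s) := by
    refine (hζ.mul_left (2 ^ (-s))).congr_fun fun m => ?_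
    have h2m : ((2 * m + 1 : ℕ) : ℂ) + 1 = ((2 : ℝ) : ℂ) * (((m : ℝ) + 1 : ℝ) : ℂ) := by
      push_cast; ring
    rw [h2m, mul_cpow_ofReal_nonneg (by norm_num) (by positivity), cpow_neg]
    push_cast
    field_simp
  have h2 : (2 : ℂ) ^ (1 - s) = 2 * 2 ^ (-s) := by
    rw [sub_eq_add_neg, cpow_add _ _ two_ne_zero, cpow_one]
  simpa only [h2, mul_div_assoc', mul_one, sub_mul, one_mul, mul_assoc] using hζ.alternating hodd

theorem mellin_etaKernel_of_one_lt_re (hs : 1 < s.re) :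
    mellin etaKernel s = Gamma s * ((1 - 2 ^ (1 - s)) * riemannZeta s) := by
  have h := hasSum_mellin (a := fun k : ℕ => (-1 : ℂ) ^ k) (p := fun k : ℕ => (k : ℝ) + 1)
    (F := etaKernel) (fun k => Or.inr (by positivity)) (by linarith) (fun t ht => ?_) ?_
  · refine h.unique (((hasSum_neg_one_pow_div_nat_add_one_cpow hs).mul_left (Gamma s)).congr_fun
      fun k => ?_)
    push_cast
    ring
  · have hx : ‖-(Real.exp (-t) : ℂ)‖ < 1 := by
      rw [norm_neg, norm_real, Real.norm_of_nonneg (Real.exp_pos _).le]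
      exact Real.exp_lt_one_iff.2 (neg_lt_zero.2 ht)
    have h := (hasSum_geometric_of_norm_lt_one hx).mul_left (Real.exp (-t) : ℂ)
    rw [show (Real.exp (-t) : ℂ) * (1 - -(Real.exp (-t) : ℂ))⁻¹ = etaKernel t by
      simp [etaKernel, div_eq_mul_inv]] at h
    refine h.congr_fun fun k => ?_
    rw [← Real.exp_neg_pow_succ, neg_pow, pow_succ]
    push_cast
    ring
  · refine ((Real.summable_one_div_nat_add_rpow 1 s.re).2 hs).congr fun k => ?_
    simp [abs_of_nonneg (by positivity : (0 : ℝ) ≤ k + 1)]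

theorem differentiableAt_mellin_etaKernel (hs : 0 < s.re) :
    DifferentiableAt ℂ (mellin etaKernel) s := by
  refine mellin_differentiableAt_of_isBigO_rpow_exp (a := 1) (b := 0) one_pos
    (continuous_etaKernel.continuousOn.locallyIntegrableOn measurableSet_Ioi) ?_ ?_ hs
  · exact Asymptotics.IsBigO.of_bound 1 (Eventually.of_forall fun t => by
      simpa [Real.norm_of_nonneg (Real.exp_pos _).le] using norm_etaKernel_le t)
  · refine Asymptotics.IsBigO.of_bound 1 (eventually_nhdsWithin_of_forall fun t (ht : 0 < t) => ?_)
    simpa [Real.exp_le_one_iff, ht.le] using (norm_etaKernel_le t).trans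
      (Real.exp_le_one_iff.2 (neg_nonpos.2 ht.le))

theorem isPreconnected_re_pos_diff_one : IsPreconnected {z : ℂ | 0 < z.re ∧ z ≠ 1} := by
  have hupper := (convex_halfSpace_re_gt 0).inter (convex_halfSpace_im_gt 0)
  have hlower := (convex_halfSpace_re_gt 0).inter (convex_halfSpace_im_lt 0)
  have hstrip := (convex_halfSpace_re_gt 0).inter (convex_halfSpace_re_lt 1)
  have hright := convex_halfSpace_re_gt (1 : ℝ)
  convert ((hupper.isPreconnected.union (1 / 2 + I) (by norm_num) (by norm_num)
    hstrip.isPreconnected).union (1 / 2 - I) (by norm_num) (by norm_num)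
    hlower.isPreconnected).union (2 + I) (by simp) (by simp) hright.isPreconnected using 1
  ext z
  simp only [mem_ofPred_eq, mem_union, mem_inter_iff, ne_eq, Complex.ext_iff, one_re, one_im]
  grind

theorem mellin_etaKernel (hs : 0 < s.re) (hs1 : s ≠ 1) :
    mellin etaKernel s = Gamma s * ((1 - 2 ^ (1 - s)) * riemannZeta s) := by
  set U : Set ℂ := {z : ℂ | 0 < z.re ∧ z ≠ 1}
  have hU : IsOpen U := (isOpen_lt continuous_const continuous_re).inter isOpen_compl_singleton
  have hmellin : AnalyticOnNhd ℂ (mellin etaKernel) U := DifferentiableOn.analyticOnNhd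
    (fun z hz => (differentiableAt_mellin_etaKernel hz.1).differentiableWithinAt) hU
  have hzeta : AnalyticOnNhd ℂ (fun z => Gamma z * ((1 - 2 ^ (1 - z)) * riemannZeta z)) U := by
    refine DifferentiableOn.analyticOnNhd
      (fun z hz => DifferentiableAt.differentiableWithinAt ?_) hU
    have hΓ : DifferentiableAt ℂ Gamma z := differentiableAt_Gamma z fun m hm => by
      linarith [hz.1, show z.re = -m by simp [hm], (Nat.cast_nonneg m : (0 : ℝ) ≤ m)]
    have hpow : DifferentiableAt ℂ (fun z : ℂ => (2 : ℂ) ^ (1 - z)) z :=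
      ((differentiableAt_const 1).sub differentiableAt_id).const_cpow (.inl two_ne_zero)
    exact hΓ.mul ((hpow.const_sub 1).mul (differentiableAt_riemannZeta hz.2))
  have h2U : (2 : ℂ) ∈ U := ⟨by norm_num, by norm_num⟩
  have hnear : mellin etaKernel =ᶠ[𝓝 2] fun z => Gamma z * ((1 - 2 ^ (1 - z)) * riemannZeta z) :=
    eventuallyEq_of_mem ((isOpen_lt continuous_const continuous_re).mem_nhds (by norm_num))
      fun z hz => mellin_etaKernel_of_one_lt_re hz
  exact hmellin.eqOn_of_preconnected_of_eventuallyEq hzeta isPreconnected_re_pos_diff_one h2U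
    hnear
    ⟨hs, hs1⟩

end

/-- Hasse's series: for `Re s > 0`, `s ≠ 1`, the series `∑_n 2^{-(n+1)} η_n(s)` converges
to the Dirichlet eta function `(1 - 2^{1-s}) ζ(s)`. -/
theorem hasse_series_eta (s : ℂ) (hs : 0 < s.re) (hs1 : s ≠ 1) :
    HasSum
      (fun n : ℕ => (1 / 2 ^ (n + 1) : ℂ) *
        ∑ k ∈ Finset.range (n + 1), (-1 : ℂ) ^ k * (Nat.choose n k : ℂ) * ((k : ℂ) + 1) ^ (-s))
      ((1 - (2 : ℂ) ^ (1 - s)) * riemannZeta s) := by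
  have hΓ := Gamma_ne_zero_of_re_pos hs
  have h := (hasSum_Gamma_mul_localEta hs).mul_left (Gamma s)⁻¹
  rw [mellin_etaKernel hs hs1, inv_mul_cancel_left₀ hΓ] at h
  exact h.congr_fun fun n => by rw [mul_left_comm, inv_mul_cancel_left₀ hΓ]; rfl
end

section
/- Let A be an associative unital algebra over ℂ, let a, b ∈ A and u ∈ ℂ satisfy b*a − a*b = u•1. Then for every natural number n, there exists c ∈ A such that b^n * a^n = (n! · u^n)•1 + c*b; that is, b^n a^n ≡ u^n·n! modulo the vacuum left module Ψb = {x*b : x ∈ A}. -/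
/-!
Commuting `b` through `a` with the Weyl relation gives `b^(m+1) a = a b^(m+1) + (m+1) u b^m`, hence
the recursion `b^(n+1) a^(n+1) = (a b) (b^n a^n) + (n+1) u (b^n a^n)`. Modulo the left ideal `A b`,
`b^n a^n` may be replaced by its scalar residue `n! uⁿ`, after which `(a b) · n! uⁿ` lies in `A b`;
so the residue is multiplied by `(n+1) u` at each step.
-/

open scoped Nat

namespace Weyl

section Semiring

variable {R A : Type*} [CommSemiring R] [Semiring A] [Algebra R A] {a b : A} {u : R}

theorem pow_succ_mul_eq (hba : b * a = a * b + u • 1) (m : ℕ) :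
    b ^ (m + 1) * a = a * b ^ (m + 1) + ((m + 1) * u) • b ^ m := by
  induction m with
  | zero => simpa using hba
  | succ m ih =>
    calc b ^ (m + 2) * a = b * (b ^ (m + 1) * a) := by rw [pow_succ' b (m + 1), mul_assoc]
      _ = (b * a) * b ^ (m + 1) + ((m + 1) * u) • b ^ (m + 1) := by
        rw [ih, mul_add, mul_smul_comm, ← pow_succ', mul_assoc]
      _ = a * b ^ (m + 2) + (((m + 1 : ℕ) + 1) * u) • b ^ (m + 1) := by
        rw [hba, add_mul, smul_mul_assoc, one_mul, mul_assoc, ← pow_succ']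
        push_cast
        module

theorem pow_succ_mul_pow_succ (hba : b * a = a * b + u • 1) (n : ℕ) :
    b ^ (n + 1) * a ^ (n + 1) = (a * b) * (b ^ n * a ^ n) + ((n + 1) * u) • (b ^ n * a ^ n) := by
  rw [pow_succ' a, ← mul_assoc, pow_succ_mul_eq hba, add_mul, smul_mul_assoc, pow_succ' b,
    mul_assoc, mul_assoc, mul_assoc]

end Semiring

section Ring

variable {R A : Type*} [CommRing R] [Ring A] [Algebra R A] {a b : A} {u : R}

theorem pow_mul_pow_sub_mem_span (hba : b * a = a * b + u • 1) (n : ℕ) :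
    b ^ n * a ^ n - (n ! * u ^ n) • (1 : A) ∈ Ideal.span {b} := by
  induction n with
  | zero => simp
  | succ n ih =>
    have hab : a * b ∈ Ideal.span {b} := Ideal.mul_mem_left _ a (Ideal.mem_span_singleton_self b)
    have key : b ^ (n + 1) * a ^ (n + 1) - ((n + 1)! * u ^ (n + 1)) • (1 : A) =
        (a * b) * (b ^ n * a ^ n - (n ! * u ^ n) • 1) + (n ! * u ^ n) • (a * b) +
          ((n + 1) * u) • (b ^ n * a ^ n - (n ! * u ^ n) • 1) := by
      rw [pow_succ_mul_pow_succ hba, Nat.factorial_succ]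
      simp only [mul_sub, smul_sub, mul_smul_comm, mul_one, smul_smul]
      push_cast
      match_scalars <;> ring
    rw [key]
    exact add_mem (add_mem (Ideal.mul_mem_left _ _ ih) (Submodule.smul_of_tower_mem _ _ hab))
      (Submodule.smul_of_tower_mem _ _ ih)

end Ring

end Weyl

/-- In a unital associative ℂ-algebra with the Weyl relation `ba - ab = u·1`,
for every `n`, `bⁿ aⁿ ≡ n! uⁿ · 1` modulo the vacuum left module `Ψb`
(the set of left multiples of `b`). -/
theorem weyl_norm_particle_states {A : Type*} [Ring A] [Algebra ℂ A] (a b : A) (u : ℂ)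
    (h : b * a - a * b = u • (1 : A)) (n : ℕ) :
    ∃ c : A, b ^ n * a ^ n = ((Nat.factorial n : ℂ) * u ^ n) • (1 : A) + c * b := by
  obtain ⟨c, hc⟩ := Ideal.mem_span_singleton'.mp
    (Weyl.pow_mul_pow_sub_mem_span (sub_eq_iff_eq_add'.mp h) n)
  exact ⟨c, by rw [hc, add_sub_cancel]⟩
end
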